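/- arXiv:2602.09436 — 3 statements merged into one kernel-verified Lean document; each statement's English description precedes it below -/
import Mathlib

section
/- Assume (H1), (H̃2), (H3). If λ ∈ ℝ and u ∈ 𝒳₁^{++} satisfy L[u](x,t) = λ u(x,t) for all (x,t) ∈ cl(Ω)×ℝ, then λ_p(L) = λ and λ_p'(L) = λ. -/
open MeasureTheory Filter Topology

noncomputable section

/-- Membership in `𝒳₁` : continuous on `cl(Ω) × ℝ`, `C¹` in `t`, 1-periodic in `t`. -/
def MemX1 {N l : ℕ} (Ω : Set (EuclideanSpace ℝ (Fin N)))
    (φ : EuclideanSpace ℝ (Fin N) → ℝ → Fin l → ℝ) : Prop :=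
  (∀ i, ContinuousOn (fun p : EuclideanSpace ℝ (Fin N) × ℝ => φ p.1 p.2 i)
      (closure Ω ×ˢ (Set.univ : Set ℝ))) ∧
  (∀ x ∈ closure Ω, ∀ i, ContDiff ℝ 1 fun t => φ x t i) ∧
  ∀ x ∈ closure Ω, ∀ (t : ℝ) (i : Fin l), φ x (t + 1) i = φ x t i

/-- Membership in `𝒳₁^{++}` : member of `𝒳₁` which is componentwise strictly positive. -/
def MemX1pp {N l : ℕ} (Ω : Set (EuclideanSpace ℝ (Fin N)))
    (φ : EuclideanSpace ℝ (Fin N) → ℝ → Fin l → ℝ) : Prop :=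
  MemX1 Ω φ ∧ ∀ x ∈ closure Ω, ∀ (t : ℝ) (i : Fin l), 0 < φ x t i

/-- Hypothesis (H2) for the coupling matrix `A`. -/
def HypH2 {N l : ℕ} (Ω : Set (EuclideanSpace ℝ (Fin N)))
    (A : EuclideanSpace ℝ (Fin N) → ℝ → Fin l → Fin l → ℝ) : Prop :=
  (∀ i j, ContinuousOn (fun p : EuclideanSpace ℝ (Fin N) × ℝ => A p.1 p.2 i j)
      (closure Ω ×ˢ (Set.univ : Set ℝ))) ∧
  (∀ x ∈ closure Ω, ∀ (t : ℝ) (i j : Fin l), i ≠ j → 0 ≤ A x t i j) ∧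
  ∀ x ∈ closure Ω, ∀ (t : ℝ) (i j : Fin l), A x (t + 1) i j = A x t i j

/-- A matrix-valued function on `cl(Ω) × ℝ` is irreducible. -/
def Irred {N l : ℕ} (Ω : Set (EuclideanSpace ℝ (Fin N)))
    (C : EuclideanSpace ℝ (Fin N) → ℝ → Fin l → Fin l → ℝ) : Prop :=
  ∀ x ∈ closure Ω, ∀ (t : ℝ) (I : Finset (Fin l)), I.Nonempty → I ≠ Finset.univ →
    ∃ i ∈ I, ∃ j, j ∉ I ∧ C x t i j ≠ 0

/-- The nonlocal time-periodic operator `L = L_{Ω,k,A}`. -/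
def Lop {N l : ℕ} (Ω : Set (EuclideanSpace ℝ (Fin N))) (τ : ℝ)
    (D A : EuclideanSpace ℝ (Fin N) → ℝ → Fin l → Fin l → ℝ)
    (k : Fin l → EuclideanSpace ℝ (Fin N) → EuclideanSpace ℝ (Fin N) → ℝ → ℝ)
    (φ : EuclideanSpace ℝ (Fin N) → ℝ → Fin l → ℝ)
    (x : EuclideanSpace ℝ (Fin N)) (t : ℝ) (i : Fin l) : ℝ :=
  -τ * deriv (fun s => φ x s i) t
    + ∑ j, D x t i j * ∫ y in Ω, k j x y t * φ y t j
    + ∑ j, A x t i j * φ x t j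

/-- The generalized principal eigenvalue `λ_p(L)`. -/
def lamP {N l : ℕ} (Ω : Set (EuclideanSpace ℝ (Fin N))) (τ : ℝ)
    (D A : EuclideanSpace ℝ (Fin N) → ℝ → Fin l → Fin l → ℝ)
    (k : Fin l → EuclideanSpace ℝ (Fin N) → EuclideanSpace ℝ (Fin N) → ℝ → ℝ) : ℝ :=
  sSup {lam : ℝ | ∃ φ, MemX1pp Ω φ ∧
    ∀ x ∈ closure Ω, ∀ (t : ℝ) (i : Fin l), lam * φ x t i ≤ Lop Ω τ D A k φ x t i}

/-- The generalized principal eigenvalue `λ_p'(L)`. -/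
def lamP' {N l : ℕ} (Ω : Set (EuclideanSpace ℝ (Fin N))) (τ : ℝ)
    (D A : EuclideanSpace ℝ (Fin N) → ℝ → Fin l → Fin l → ℝ)
    (k : Fin l → EuclideanSpace ℝ (Fin N) → EuclideanSpace ℝ (Fin N) → ℝ → ℝ) : ℝ :=
  sInf {lam : ℝ | ∃ φ, MemX1pp Ω φ ∧
    ∀ x ∈ closure Ω, ∀ (t : ℝ) (i : Fin l), Lop Ω τ D A k φ x t i ≤ lam * φ x t i}

/-- Hypothesis (H1) for the dispersal matrix `D`. -/
def HypH1 {N l : ℕ} (Ω : Set (EuclideanSpace ℝ (Fin N)))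
    (D : EuclideanSpace ℝ (Fin N) → ℝ → Fin l → Fin l → ℝ) : Prop :=
  (∀ i j, ContinuousOn (fun p : EuclideanSpace ℝ (Fin N) × ℝ => D p.1 p.2 i j)
      (closure Ω ×ˢ (Set.univ : Set ℝ))) ∧
  (∀ x ∈ closure Ω, ∀ (t : ℝ) (i j : Fin l), 0 ≤ D x t i j) ∧
  (∀ x ∈ closure Ω, ∀ (t : ℝ) (i : Fin l), 0 < D x t i i) ∧
  ∀ x ∈ closure Ω, ∀ (t : ℝ) (i j : Fin l), D x (t + 1) i j = D x t i j

/-- Hypothesis (H3) for the kernels `k_i`. -/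
def HypH3 {N l : ℕ} (k : Fin l → EuclideanSpace ℝ (Fin N) → EuclideanSpace ℝ (Fin N) → ℝ → ℝ) : Prop :=
  (∀ i, Continuous fun p : EuclideanSpace ℝ (Fin N) × EuclideanSpace ℝ (Fin N) × ℝ =>
      k i p.1 p.2.1 p.2.2) ∧
  (∀ i x y t, 0 ≤ k i x y t) ∧
  (∀ i x t, 0 < k i x x t) ∧
  ∀ i x y t, k i x y (t + 1) = k i x y t


/-!
If `γ φ ≤ ψ` with `γ` maximal, then `γ φ` touches `ψ` from below at some point `(x₀, t₀, i₀)`;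
such a point exists because `ψ / φ` is continuous and periodic on a compact set. At it, the
derivatives in `t` agree, while the nonlocal and coupling terms of `L` are monotone (the kernels,
`D` and the off-diagonal entries of `A` are nonnegative), so `γ L[φ] ≤ L[ψ]` there. Hence
`μ φ ≤ L[φ]` and `L[ψ] ≤ ν ψ` force `μ ≤ ν`, and an eigenpair `(λ, u)` realises both extremal
values.
-/

open MeasureTheory Set

lemma Function.Periodic.apply_fract {α : Type*} {f : ℝ → α} (hf : Function.Periodic f 1)
    (t : ℝ) : f (Int.fract t) = f t := by
  simpa [Int.self_sub_floor] using hf.sub_int_mul_eq (x := t) ⌊t⌋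

lemma exists_touching_mul_le {X ι : Type*} [TopologicalSpace X] [Finite ι] [Nonempty ι]
    {K : Set X} (hK : IsCompact K) (hKne : K.Nonempty) {φ ψ : X → ℝ → ι → ℝ}
    (hφc : ∀ i, ContinuousOn (fun p : X × ℝ => φ p.1 p.2 i) (K ×ˢ univ))
    (hψc : ∀ i, ContinuousOn (fun p : X × ℝ => ψ p.1 p.2 i) (K ×ˢ univ))
    (hφper : ∀ x ∈ K, Function.Periodic (φ x) 1) (hψper : ∀ x ∈ K, Function.Periodic (ψ x) 1)
    (hφpos : ∀ x ∈ K, ∀ t i, 0 < φ x t i) :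
    ∃ γ : ℝ, (∀ x ∈ K, ∀ t i, γ * φ x t i ≤ ψ x t i) ∧
      ∃ x₀ ∈ K, ∃ t₀ i₀, ψ x₀ t₀ i₀ = γ * φ x₀ t₀ i₀ := by
  set ratio : ι → X × ℝ → ℝ := fun i p => ψ p.1 p.2 i / φ p.1 p.2 i
  have hsub : K ×ˢ Icc (0 : ℝ) 1 ⊆ K ×ˢ univ := prod_mono le_rfl (subset_univ _)
  have hcont : ∀ i, ContinuousOn (ratio i) (K ×ˢ Icc 0 1) := fun i =>
    ((hψc i).div (hφc i) fun p hp => (hφpos p.1 hp.1 p.2 i).ne').mono hsub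
  have hne : (K ×ˢ Icc (0 : ℝ) 1).Nonempty := hKne.prod (nonempty_Icc.2 zero_le_one)
  choose p hpK hpmin using fun i => (hK.prod isCompact_Icc).exists_isMinOn hne (hcont i)
  obtain ⟨i₀, hi₀⟩ := Finite.exists_min fun i => ratio i (p i)
  have hφ₀ := hφpos _ (hpK i₀).1 (p i₀).2 i₀
  refine ⟨ratio i₀ (p i₀), fun x hx t i => ?_, (p i₀).1, (hpK i₀).1, (p i₀).2, i₀,
    (div_mul_cancel₀ _ hφ₀.ne').symm⟩
  have hmem : (x, Int.fract t) ∈ K ×ˢ Icc (0 : ℝ) 1 :=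
    ⟨hx, Int.fract_nonneg t, (Int.fract_lt_one t).le⟩
  have hle : ratio i₀ (p i₀) ≤ ratio i (x, Int.fract t) := (hi₀ i).trans (hpmin i hmem)
  rw [le_div_iff₀ (hφpos x hx _ i), (hφper x hx).apply_fract, (hψper x hx).apply_fract] at hle
  exact hle

lemma deriv_eq_const_mul_of_touching {f g : ℝ → ℝ} {γ t₀ : ℝ}
    (hf : DifferentiableAt ℝ f t₀) (hg : DifferentiableAt ℝ g t₀)
    (hle : ∀ t, γ * f t ≤ g t) (heq : g t₀ = γ * f t₀) :
    deriv g t₀ = γ * deriv f t₀ := by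
  have hmin : IsLocalMin (fun t => g t - γ * f t) t₀ :=
    Filter.Eventually.of_forall fun t => by simp only [heq, sub_self, sub_nonneg, hle]
  have h0 := hmin.deriv_eq_zero
  rw [deriv_fun_sub hg (hf.const_mul γ), deriv_const_mul γ hf] at h0
  linarith

lemma mul_sum_le_sum_of_touching {ι : Type*} [Fintype ι] {a v w : ι → ℝ} {γ : ℝ} {i₀ : ι}
    (ha : ∀ j, j ≠ i₀ → 0 ≤ a j) (hle : ∀ j, γ * v j ≤ w j) (heq : w i₀ = γ * v i₀) :
    γ * ∑ j, a j * v j ≤ ∑ j, a j * w j := by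
  rw [Finset.mul_sum]
  refine Finset.sum_le_sum fun j _ => ?_
  rcases eq_or_ne j i₀ with rfl | hj
  · rw [heq]; ring_nf; rfl
  · nlinarith [ha j hj, hle j]

lemma mul_setIntegral_le_of_le_on_closure {X : Type*} [TopologicalSpace X] [MeasurableSpace X]
    [OpensMeasurableSpace X] {μ : Measure X} {s : Set X} {f g : X → ℝ} {γ : ℝ}
    (hf : IntegrableOn f s μ) (hg : IntegrableOn g s μ) (h : ∀ x ∈ closure s, γ * f x ≤ g x) :
    γ * ∫ x in s, f x ∂μ ≤ ∫ x in s, g x ∂μ := by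
  rw [← integral_const_mul]
  refine setIntegral_mono_ae_restrict (hf.const_mul γ) hg ?_
  have hcl : ∀ᵐ x ∂μ.restrict (closure s), x ∈ closure s :=
    ae_restrict_mem isClosed_closure.measurableSet
  filter_upwards [ae_restrict_of_ae_restrict_of_subset subset_closure hcl] with x hx using h x hx

section Comparison

variable {N l : ℕ} {Ω : Set (EuclideanSpace ℝ (Fin N))}
  {k : Fin l → EuclideanSpace ℝ (Fin N) → EuclideanSpace ℝ (Fin N) → ℝ → ℝ}

lemma MemX1.periodic {w : EuclideanSpace ℝ (Fin N) → ℝ → Fin l → ℝ} (hw : MemX1 Ω w)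
    {x : EuclideanSpace ℝ (Fin N)} (hx : x ∈ closure Ω) : Function.Periodic (w x) 1 :=
  fun t => funext (hw.2.2 x hx t)

lemma integrableOn_kernel_mul_add_const (hΩb : Bornology.IsBounded Ω)
    (hkc : ∀ i, Continuous fun p : EuclideanSpace ℝ (Fin N) × EuclideanSpace ℝ (Fin N) × ℝ =>
      k i p.1 p.2.1 p.2.2)
    {w : EuclideanSpace ℝ (Fin N) → ℝ → Fin l → ℝ}
    (hw : ∀ i, ContinuousOn (fun p : EuclideanSpace ℝ (Fin N) × ℝ => w p.1 p.2 i)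
      (closure Ω ×ˢ univ)) (x : EuclideanSpace ℝ (Fin N)) (t c : ℝ) (j : Fin l) :
    IntegrableOn (fun y => k j x y t * w y t j + c) Ω := by
  have hk : ContinuousOn (fun y => k j x y t) (closure Ω) :=
    ((hkc j).comp (by fun_prop : Continuous fun y => (x, y, t))).continuousOn
  have hwt : ContinuousOn (fun y => w y t j) (closure Ω) :=
    (hw j).comp (continuous_id.prodMk continuous_const).continuousOn fun y hy => ⟨hy, trivial⟩
  exact (((hk.mul hwt).add continuousOn_const).integrableOn_compact
    hΩb.isCompact_closure).mono_set subset_closure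

variable {τ : ℝ} {D A : EuclideanSpace ℝ (Fin N) → ℝ → Fin l → Fin l → ℝ}

lemma mul_Lop_le_Lop_of_touching (hΩb : Bornology.IsBounded Ω)
    (hD0 : ∀ x ∈ closure Ω, ∀ (t : ℝ) (i j : Fin l), 0 ≤ D x t i j)
    (hA0 : ∀ x ∈ closure Ω, ∀ (t : ℝ) (i j : Fin l), i ≠ j → 0 ≤ A x t i j)
    (hkc : ∀ i, Continuous fun p : EuclideanSpace ℝ (Fin N) × EuclideanSpace ℝ (Fin N) × ℝ =>
      k i p.1 p.2.1 p.2.2)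
    (hk0 : ∀ i x y t, 0 ≤ k i x y t)
    {φ ψ : EuclideanSpace ℝ (Fin N) → ℝ → Fin l → ℝ} (hφ : MemX1 Ω φ) (hψ : MemX1 Ω ψ)
    {γ : ℝ} (hle : ∀ x ∈ closure Ω, ∀ (t : ℝ) (i : Fin l), γ * φ x t i ≤ ψ x t i)
    {x₀ : EuclideanSpace ℝ (Fin N)} (hx₀ : x₀ ∈ closure Ω) {t₀ : ℝ} {i₀ : Fin l}
    (heq : ψ x₀ t₀ i₀ = γ * φ x₀ t₀ i₀) :
    γ * Lop Ω τ D A k φ x₀ t₀ i₀ ≤ Lop Ω τ D A k ψ x₀ t₀ i₀ := by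
  have hderiv : deriv (fun s => ψ x₀ s i₀) t₀ = γ * deriv (fun s => φ x₀ s i₀) t₀ :=
    deriv_eq_const_mul_of_touching
      (((hφ.2.1 x₀ hx₀ i₀).differentiable one_ne_zero).differentiableAt)
      (((hψ.2.1 x₀ hx₀ i₀).differentiable one_ne_zero).differentiableAt)
      (fun t => hle x₀ hx₀ t i₀) heq
  have hcoupling : γ * ∑ m, A x₀ t₀ i₀ m * φ x₀ t₀ m ≤ ∑ m, A x₀ t₀ i₀ m * ψ x₀ t₀ m :=
    mul_sum_le_sum_of_touching (fun j hj => hA0 x₀ hx₀ t₀ i₀ j hj.symm)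
      (fun j => hle x₀ hx₀ t₀ j) heq
  -- The binder of `∫ y in Ω, …` in `Lop` extends to the end, so the coupling term is inside.
  have hintegral : ∀ j,
      γ * ∫ y in Ω, (k j x₀ y t₀ * φ y t₀ j + ∑ m, A x₀ t₀ i₀ m * φ x₀ t₀ m)
        ≤ ∫ y in Ω, (k j x₀ y t₀ * ψ y t₀ j + ∑ m, A x₀ t₀ i₀ m * ψ x₀ t₀ m) := fun j =>
    mul_setIntegral_le_of_le_on_closure
      (integrableOn_kernel_mul_add_const hΩb hkc hφ.1 _ _ _ _)
      (integrableOn_kernel_mul_add_const hΩb hkc hψ.1 _ _ _ _) fun y hy => by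
        linarith [hcoupling, mul_le_mul_of_nonneg_left (hle y hy t₀ j) (hk0 j x₀ y t₀)]
  have hnonlocal := Finset.sum_le_sum fun j (_ : j ∈ Finset.univ) =>
    mul_le_mul_of_nonneg_left (hintegral j) (hD0 x₀ hx₀ t₀ i₀ j)
  unfold Lop
  rw [hderiv]
  simp only [mul_left_comm _ γ, ← Finset.mul_sum] at hnonlocal
  linarith

theorem le_of_mul_le_Lop_of_Lop_le_mul [Nonempty (Fin l)] (hΩne : Ω.Nonempty)
    (hΩb : Bornology.IsBounded Ω)
    (hD0 : ∀ x ∈ closure Ω, ∀ (t : ℝ) (i j : Fin l), 0 ≤ D x t i j)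
    (hA0 : ∀ x ∈ closure Ω, ∀ (t : ℝ) (i j : Fin l), i ≠ j → 0 ≤ A x t i j)
    (hkc : ∀ i, Continuous fun p : EuclideanSpace ℝ (Fin N) × EuclideanSpace ℝ (Fin N) × ℝ =>
      k i p.1 p.2.1 p.2.2)
    (hk0 : ∀ i x y t, 0 ≤ k i x y t)
    {μ ν : ℝ} {φ ψ : EuclideanSpace ℝ (Fin N) → ℝ → Fin l → ℝ}
    (hφ : MemX1pp Ω φ) (hψ : MemX1pp Ω ψ)
    (hφsub : ∀ x ∈ closure Ω, ∀ (t : ℝ) (i : Fin l), μ * φ x t i ≤ Lop Ω τ D A k φ x t i)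
    (hψsuper : ∀ x ∈ closure Ω, ∀ (t : ℝ) (i : Fin l), Lop Ω τ D A k ψ x t i ≤ ν * ψ x t i) :
    μ ≤ ν := by
  obtain ⟨γ, hle, x₀, hx₀, t₀, i₀, heq⟩ := exists_touching_mul_le hΩb.isCompact_closure
    hΩne.closure hφ.1.1 hψ.1.1 (fun _ hx => hφ.1.periodic hx) (fun _ hx => hψ.1.periodic hx) hφ.2
  have hφ₀ := hφ.2 x₀ hx₀ t₀ i₀
  have hγ : 0 < γ := pos_of_mul_pos_left (heq ▸ hψ.2 x₀ hx₀ t₀ i₀) hφ₀.le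
  have hL := mul_Lop_le_Lop_of_touching (τ := τ) hΩb hD0 hA0 hkc hk0 hφ.1 hψ.1 hle hx₀ heq
  have key : μ * (γ * φ x₀ t₀ i₀) ≤ ν * (γ * φ x₀ t₀ i₀) := by
    calc μ * (γ * φ x₀ t₀ i₀) = γ * (μ * φ x₀ t₀ i₀) := by ring
      _ ≤ γ * Lop Ω τ D A k φ x₀ t₀ i₀ := mul_le_mul_of_nonneg_left (hφsub x₀ hx₀ t₀ i₀) hγ.le
      _ ≤ Lop Ω τ D A k ψ x₀ t₀ i₀ := hL
      _ ≤ ν * ψ x₀ t₀ i₀ := hψsuper x₀ hx₀ t₀ i₀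
      _ = ν * (γ * φ x₀ t₀ i₀) := by rw [heq]
  exact le_of_mul_le_mul_right key (mul_pos hγ hφ₀)

end Comparison

theorem stmt3_general {N l : ℕ} (hl : 1 ≤ l)
    (Ω : Set (EuclideanSpace ℝ (Fin N))) (hΩne : Ω.Nonempty)
    (hΩb : Bornology.IsBounded Ω) (τ : ℝ)
    (D A : EuclideanSpace ℝ (Fin N) → ℝ → Fin l → Fin l → ℝ)
    (k : Fin l → EuclideanSpace ℝ (Fin N) → EuclideanSpace ℝ (Fin N) → ℝ → ℝ)
    (hH1 : HypH1 Ω D) (hH2 : HypH2 Ω A) (hH3 : HypH3 k)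
    (lam : ℝ) (u : EuclideanSpace ℝ (Fin N) → ℝ → Fin l → ℝ)
    (hu : MemX1pp Ω u)
    (hueq : ∀ x ∈ closure Ω, ∀ (t : ℝ) (i : Fin l), Lop Ω τ D A k u x t i = lam * u x t i) :
    lamP Ω τ D A k = lam ∧ lamP' Ω τ D A k = lam := by
  have : Nonempty (Fin l) := ⟨⟨0, hl⟩⟩
  constructor
  · refine IsGreatest.csSup_eq ⟨⟨u, hu, fun x hx t i => (hueq x hx t i).ge⟩, ?_⟩
    rintro μ ⟨φ, hφ, hφsub⟩
    exact le_of_mul_le_Lop_of_Lop_le_mul hΩne hΩb hH1.2.1 hH2.2.1 hH3.1 hH3.2.1 hφ hu hφsub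
      fun x hx t i => (hueq x hx t i).le
  · refine IsLeast.csInf_eq ⟨⟨u, hu, fun x hx t i => (hueq x hx t i).le⟩, ?_⟩
    rintro ν ⟨ψ, hψ, hψsuper⟩
    exact le_of_mul_le_Lop_of_Lop_le_mul hΩne hΩb hH1.2.1 hH2.2.1 hH3.1 hH3.2.1 hu hψ
      (fun x hx t i => (hueq x hx t i).ge) hψsuper

theorem stmt3 {N l : ℕ} (hN : 1 ≤ N) (hl : 1 ≤ l)
    (Ω : Set (EuclideanSpace ℝ (Fin N))) (hΩne : Ω.Nonempty) (hΩo : IsOpen Ω)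
    (hΩb : Bornology.IsBounded Ω) (τ : ℝ) (hτ : 0 < τ)
    (D A : EuclideanSpace ℝ (Fin N) → ℝ → Fin l → Fin l → ℝ)
    (k : Fin l → EuclideanSpace ℝ (Fin N) → EuclideanSpace ℝ (Fin N) → ℝ → ℝ)
    (hH1 : HypH1 Ω D) (hH2 : HypH2 Ω A) (hH3 : HypH3 k)
    (hirr : Irred Ω D ∨ Irred Ω A)
    (lam : ℝ) (u : EuclideanSpace ℝ (Fin N) → ℝ → Fin l → ℝ)
    (hu : MemX1pp Ω u)
    (hueq : ∀ x ∈ closure Ω, ∀ (t : ℝ) (i : Fin l), Lop Ω τ D A k u x t i = lam * u x t i) :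
    lamP Ω τ D A k = lam ∧ lamP' Ω τ D A k = lam :=
  stmt3_general hl Ω hΩne hΩb τ D A k hH1 hH2 hH3 lam u hu hueq
end
end

section
/- Assume (H1), (H2), (H3). For every ε > 0 there exists δ > 0 such that for every matrix-valued function Ã = (ã_{ij}) on cl(Ω)×ℝ satisfying (H2) and sup_{i,j,x,t} |ã_{ij}(x,t) − a_{ij}(x,t)| ≤ δ, one has λ_p(L_{Ω,k,Ã}) ≥ λ_p(L_{Ω,k,A}) − ε and λ_p'(L_{Ω,k,Ã}) ≤ λ_p'(L_{Ω,k,A}) + ε. -/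
open MeasureTheory Filter Topology

noncomputable section

/-!
A perturbation of the coupling matrix by at most `δ` only changes the zeroth-order part of `Lop`,
so for a fixed positive periodic test function `φ` it moves `Lop φ` by `O(δ) · φ`: the components
of `φ` are comparable on the compact set `cl(Ω) × [0, 1]`, hence on `cl(Ω) × ℝ` by periodicity.
Thus a test function almost realising `λ_p` (or `λ_p'`) for `A` still almost realises it for `Ã`.
Passing to the supremum (infimum) for `Ã` needs the set of admissible `λ` to be bounded above
(below): summing the inequalities over the components at a maximum point of `∑ i, φ x t i`, where
the time derivatives cancel, bounds `λ` by the size of the nonlocal part. The constant test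
function `1` shows that the sets are nonempty.
-/

open Set Finset

section Periodic

variable {α : Type*} {K : Set α} {g : α × ℝ → ℝ}

theorem image_prod_univ_eq_of_periodic (hper : ∀ x ∈ K, ∀ t, g (x, t + 1) = g (x, t)) :
    g '' (K ×ˢ univ) = g '' (K ×ˢ Set.Icc 0 1) := by
  refine Subset.antisymm ?_ (image_mono (prod_mono_right (subset_univ _)))
  rintro _ ⟨⟨x, t⟩, ⟨hx, -⟩, rfl⟩
  obtain ⟨s, hs, hts⟩ :=
    Function.Periodic.exists_mem_Ico₀ (f := fun s => g (x, s)) (fun t => hper x hx t) one_pos t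
  exact ⟨(x, s), ⟨hx, Ico_subset_Icc_self hs⟩, hts.symm⟩

variable [TopologicalSpace α]

theorem isCompact_image_prod_univ_of_periodic (hK : IsCompact K)
    (hg : ContinuousOn g (K ×ˢ univ)) (hper : ∀ x ∈ K, ∀ t, g (x, t + 1) = g (x, t)) :
    IsCompact (g '' (K ×ˢ univ)) := by
  rw [image_prod_univ_eq_of_periodic hper]
  exact (hK.prod isCompact_Icc).image_of_continuousOn (hg.mono (prod_mono_right (subset_univ _)))

theorem exists_isMaxOn_prod_univ_of_periodic (hK : IsCompact K) (hne : K.Nonempty)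
    (hg : ContinuousOn g (K ×ˢ univ)) (hper : ∀ x ∈ K, ∀ t, g (x, t + 1) = g (x, t)) :
    ∃ p ∈ K ×ˢ univ, IsMaxOn g (K ×ˢ univ) p := by
  obtain ⟨_, ⟨p, hp, rfl⟩, hmax⟩ := (isCompact_image_prod_univ_of_periodic hK hg hper)
    |>.exists_isGreatest ((hne.prod Set.univ_nonempty).image g)
  exact ⟨p, hp, fun q hq => hmax (mem_image_of_mem g hq)⟩

theorem exists_forall_abs_le_of_periodic {ι : Type*} [Fintype ι] {g : ι → α × ℝ → ℝ}
    (hK : IsCompact K) (hg : ∀ i, ContinuousOn (g i) (K ×ˢ univ))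
    (hper : ∀ i, ∀ x ∈ K, ∀ t, g i (x, t + 1) = g i (x, t)) :
    ∃ C, 0 ≤ C ∧ ∀ i, ∀ p ∈ K ×ˢ univ, |g i p| ≤ C := by
  obtain ⟨C, hC⟩ := (isCompact_image_prod_univ_of_periodic hK
    (continuousOn_finsetSum univ fun i _ => (hg i).abs)
    (fun x hx t => by simp only [hper _ x hx])).bddAbove
  refine ⟨max C 0, le_max_right _ _, fun i p hp => ?_⟩
  calc |g i p| ≤ ∑ j, |g j p| :=
        single_le_sum (f := fun j => |g j p|) (fun j _ => abs_nonneg _) (mem_univ i)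
    _ ≤ C := hC (mem_image_of_mem _ hp)
    _ ≤ max C 0 := le_max_left _ _

end Periodic

theorem abs_sum_mul_le {l : ℕ} {a b : Fin l → ℝ} {A S : ℝ} (ha : ∀ j, |a j| ≤ A)
    (hb : ∀ j, |b j| ≤ S) : |∑ j, a j * b j| ≤ l * (A * S) := by
  calc |∑ j, a j * b j| ≤ ∑ j, |a j * b j| := abs_sum_le_sum_abs _ _
    _ ≤ ∑ _j : Fin l, A * S := sum_le_sum fun j _ => by
        rw [abs_mul]
        exact mul_le_mul (ha j) (hb j) (abs_nonneg _) ((abs_nonneg _).trans (ha j))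
    _ = l * (A * S) := by simp

namespace PeriodicNonlocal

variable {N l : ℕ}

local notation "X" => EuclideanSpace ℝ (Fin N)

variable {Ω : Set (EuclideanSpace ℝ (Fin N))} {τ : ℝ}
  {D B B' : EuclideanSpace ℝ (Fin N) → ℝ → Fin l → Fin l → ℝ}
  {k : Fin l → EuclideanSpace ℝ (Fin N) → EuclideanSpace ℝ (Fin N) → ℝ → ℝ}
  {φ : EuclideanSpace ℝ (Fin N) → ℝ → Fin l → ℝ}

theorem exists_abs_entry_le (hK : IsCompact (closure Ω)) {M : X → ℝ → Fin l → Fin l → ℝ}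
    (hc : ∀ i j, ContinuousOn (fun p : X × ℝ => M p.1 p.2 i j) (closure Ω ×ˢ univ))
    (hper : ∀ x ∈ closure Ω, ∀ t i j, M x (t + 1) i j = M x t i j) :
    ∃ C, 0 ≤ C ∧ ∀ x ∈ closure Ω, ∀ t i j, |M x t i j| ≤ C := by
  obtain ⟨C, hC0, hC⟩ := exists_forall_abs_le_of_periodic
    (g := fun (ij : Fin l × Fin l) (p : X × ℝ) => M p.1 p.2 ij.1 ij.2) hK
    (fun ij => hc ij.1 ij.2) (fun ij x hx t => hper x hx t ij.1 ij.2)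
  exact ⟨C, hC0, fun x hx t i j => hC (i, j) (x, t) ⟨hx, trivial⟩⟩

theorem exists_abs_kernel_le (hK : IsCompact (closure Ω)) (hk : HypH3 k) :
    ∃ C, ∀ j, ∀ x ∈ closure Ω, ∀ y ∈ closure Ω, ∀ t, |k j x y t| ≤ C := by
  obtain ⟨C, -, hC⟩ := exists_forall_abs_le_of_periodic (K := closure Ω ×ˢ closure Ω)
    (g := fun j (p : (X × X) × ℝ) => k j p.1.1 p.1.2 p.2) (hK.prod hK)
    (fun j => ((hk.1 j).comp (by fun_prop : Continuous fun p : (X × X) × ℝ =>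
      (p.1.1, p.1.2, p.2))).continuousOn)
    (fun j p _ t => hk.2.2.2 j p.1 p.2 t)
  exact ⟨C, fun j x hx y hy t => hC j ((x, y), t) ⟨⟨hx, hy⟩, trivial⟩⟩

theorem exists_sum_le_mul_of_memX1pp (hK : IsCompact (closure Ω)) (hφ : MemX1pp Ω φ) :
    ∃ R, 0 ≤ R ∧ ∀ x ∈ closure Ω, ∀ t i, ∑ j, φ x t j ≤ R * φ x t i := by
  obtain ⟨R, hR0, hR⟩ := exists_forall_abs_le_of_periodic
    (g := fun i (p : X × ℝ) => (∑ j, φ p.1 p.2 j) / φ p.1 p.2 i) hK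
    (fun i => (continuousOn_finsetSum univ fun j _ => hφ.1.1 j).div (hφ.1.1 i)
      fun p hp => (hφ.2 p.1 hp.1 p.2 i).ne')
    (fun i x hx t => by simp only [hφ.1.2.2 x hx])
  refine ⟨R, hR0, fun x hx t i => ?_⟩
  rw [← div_le_iff₀ (hφ.2 x hx t i)]
  exact (le_abs_self _).trans (hR i (x, t) ⟨hx, trivial⟩)

theorem integrableOn_kernel_mul (hK : IsCompact (closure Ω))
    (hk : ∀ j, Continuous fun p : X × X × ℝ => k j p.1 p.2.1 p.2.2)
    (hφ : ∀ j, ContinuousOn (fun p : X × ℝ => φ p.1 p.2 j) (closure Ω ×ˢ univ))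
    (j : Fin l) (x : X) (t : ℝ) : IntegrableOn (fun y => k j x y t * φ y t j) Ω := by
  have : ContinuousOn (fun y => k j x y t * φ y t j) (closure Ω) :=
    ((hk j).comp (by fun_prop : Continuous fun y : X => (x, y, t))).continuousOn.mul
      ((hφ j).comp (by fun_prop : Continuous fun y : X => (y, t)).continuousOn
        fun y hy => ⟨hy, trivial⟩)
  exact (this.integrableOn_compact hK).mono_set subset_closure

/-- `Lop` without its time derivative. Since `∫ y in Ω, …` extends to the end of the line in
`Lop`, the zeroth-order term `∑ j₂, B x t i j₂ * φ x t j₂` is integrated over `Ω` and weighted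
by `D x t i j` together with the nonlocal term. -/
def nonlocalPart (Ω : Set X) (D B : X → ℝ → Fin l → Fin l → ℝ) (k : Fin l → X → X → ℝ → ℝ)
    (φ : X → ℝ → Fin l → ℝ) (x : X) (t : ℝ) (i : Fin l) : ℝ :=
  ∑ j, D x t i j * ∫ y in Ω, (k j x y t * φ y t j + ∑ j₂, B x t i j₂ * φ x t j₂)

theorem Lop_eq_nonlocalPart (x : X) (t : ℝ) (i : Fin l) :
    Lop Ω τ D B k φ x t i = -τ * deriv (fun s => φ x s i) t + nonlocalPart Ω D B k φ x t i :=
  rfl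

def IsNonlocalBound (Ω : Set X) (D B : X → ℝ → Fin l → Fin l → ℝ)
    (k : Fin l → X → X → ℝ → ℝ) (C : ℝ) : Prop :=
  ∀ (φ : X → ℝ → Fin l → ℝ) (x : X) (t S : ℝ), x ∈ closure Ω →
    (∀ y ∈ closure Ω, ∀ j, |φ y t j| ≤ S) → ∀ i, |nonlocalPart Ω D B k φ x t i| ≤ C * S

theorem isNonlocalBound_of_abs_le (hΩ : volume Ω < ⊤) {CD Ck CB : ℝ}
    (hD : ∀ x ∈ closure Ω, ∀ t i j, |D x t i j| ≤ CD)
    (hk : ∀ j, ∀ x ∈ closure Ω, ∀ y ∈ closure Ω, ∀ t, |k j x y t| ≤ Ck)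
    (hB : ∀ x ∈ closure Ω, ∀ t i j, |B x t i j| ≤ CB) :
    IsNonlocalBound Ω D B k (l * (CD * ((Ck + l * CB) * volume.real Ω))) := by
  intro φ x t S hx hφ i
  have hint : ∀ j, |∫ y in Ω, (k j x y t * φ y t j + ∑ j₂, B x t i j₂ * φ x t j₂)|
      ≤ (Ck + l * CB) * S * volume.real Ω := by
    intro j
    rw [← Real.norm_eq_abs]
    refine norm_setIntegral_le_of_norm_le_const hΩ fun y hy => ?_
    rw [Real.norm_eq_abs]
    have hk' := hk j x hx y (subset_closure hy) t
    calc |k j x y t * φ y t j + ∑ j₂, B x t i j₂ * φ x t j₂|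
          ≤ |k j x y t * φ y t j| + |∑ j₂, B x t i j₂ * φ x t j₂| := abs_add_le _ _
        _ ≤ Ck * S + l * (CB * S) := by
          rw [abs_mul]
          exact add_le_add (mul_le_mul hk' (hφ y (subset_closure hy) j) (abs_nonneg _)
            ((abs_nonneg _).trans hk')) (abs_sum_mul_le (hB x hx t i) (hφ x hx))
        _ = (Ck + l * CB) * S := by ring
  calc |nonlocalPart Ω D B k φ x t i|
      ≤ l * (CD * ((Ck + l * CB) * S * volume.real Ω)) := abs_sum_mul_le (hD x hx t i) hint
    _ = l * (CD * ((Ck + l * CB) * volume.real Ω)) * S := by ring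

theorem exists_isNonlocalBound (hK : IsCompact (closure Ω)) (hD : HypH1 Ω D) (hk : HypH3 k)
    (hB : HypH2 Ω B) : ∃ C, IsNonlocalBound Ω D B k C := by
  obtain ⟨CD, -, hCD⟩ := exists_abs_entry_le hK hD.1 hD.2.2.2
  obtain ⟨Ck, hCk⟩ := exists_abs_kernel_le hK hk
  obtain ⟨CB, -, hCB⟩ := exists_abs_entry_le hK hB.1 hB.2.2
  exact ⟨_, isNonlocalBound_of_abs_le
    ((measure_mono subset_closure).trans_lt hK.measure_lt_top) hCD hCk hCB⟩

theorem Lop_sub_Lop (hΩ : volume Ω < ⊤) {x : X} {t : ℝ}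
    (hint : ∀ j, IntegrableOn (fun y => k j x y t * φ y t j) Ω) (i : Fin l) :
    Lop Ω τ D B' k φ x t i - Lop Ω τ D B k φ x t i =
      ∑ j, D x t i j * (volume.real Ω * ∑ j₂, (B' x t i j₂ - B x t i j₂) * φ x t j₂) := by
  have hsplit : ∀ (c : ℝ) j, ∫ y in Ω, (k j x y t * φ y t j + c) =
      (∫ y in Ω, k j x y t * φ y t j) + volume.real Ω * c := fun c j => by
    rw [integral_add (hint j) (integrableOn_const hΩ.ne), setIntegral_const, smul_eq_mul]
  rw [Lop_eq_nonlocalPart, Lop_eq_nonlocalPart, add_sub_add_left_eq_sub, nonlocalPart,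
    nonlocalPart, ← sum_sub_distrib]
  refine sum_congr rfl fun j _ => ?_
  simp only [hsplit, sub_mul, sum_sub_distrib]
  ring

theorem abs_Lop_sub_Lop_le (hK : IsCompact (closure Ω))
    (hk : ∀ j, Continuous fun p : X × X × ℝ => k j p.1 p.2.1 p.2.2) (hφ : MemX1pp Ω φ)
    {CD R δ : ℝ} (hD : ∀ x ∈ closure Ω, ∀ t i j, |D x t i j| ≤ CD)
    (hR : ∀ x ∈ closure Ω, ∀ t i, ∑ j, φ x t j ≤ R * φ x t i)
    (hδ : ∀ x ∈ closure Ω, ∀ t i j, |B' x t i j - B x t i j| ≤ δ)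
    {x : X} (hx : x ∈ closure Ω) (t : ℝ) (i : Fin l) :
    |Lop Ω τ D B' k φ x t i - Lop Ω τ D B k φ x t i|
      ≤ l * (CD * (volume.real Ω * (l * (δ * R)))) * φ x t i := by
  have hφR : ∀ j, |φ x t j| ≤ R * φ x t i := fun j => by
    rw [abs_of_pos (hφ.2 x hx t j)]
    exact (single_le_sum (fun j _ => (hφ.2 x hx t j).le) (mem_univ j)).trans (hR x hx t i)
  rw [Lop_sub_Lop ((measure_mono subset_closure).trans_lt hK.measure_lt_top)
    (fun j => integrableOn_kernel_mul hK hk hφ.1.1 j x t)]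
  calc _ ≤ l * (CD * (volume.real Ω * (l * (δ * (R * φ x t i))))) :=
        abs_sum_mul_le (hD x hx t i) fun j => by
          rw [abs_mul, abs_of_nonneg measureReal_nonneg]
          exact mul_le_mul_of_nonneg_left (abs_sum_mul_le (hδ x hx t i) hφR) measureReal_nonneg
    _ = _ := by ring

theorem exists_forall_abs_Lop_sub_le (hK : IsCompact (closure Ω)) (hD : HypH1 Ω D)
    (hk : ∀ j, Continuous fun p : X × X × ℝ => k j p.1 p.2.1 p.2.2) (hφ : MemX1pp Ω φ)
    {ε : ℝ} (hε : 0 < ε) :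
    ∃ δ > 0, ∀ B B' : X → ℝ → Fin l → Fin l → ℝ,
      (∀ x ∈ closure Ω, ∀ t i j, |B' x t i j - B x t i j| ≤ δ) →
      ∀ x ∈ closure Ω, ∀ t i, |Lop Ω τ D B' k φ x t i - Lop Ω τ D B k φ x t i| ≤ ε * φ x t i := by
  obtain ⟨CD, hCD0, hCD⟩ := exists_abs_entry_le hK hD.1 hD.2.2.2
  obtain ⟨R, hR0, hR⟩ := exists_sum_le_mul_of_memX1pp hK hφ
  set c := l * (CD * (volume.real Ω * (l * R)))
  have hc : 0 ≤ c := by positivity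
  refine ⟨ε / (c + 1), by positivity, fun B B' hδ x hx t i => ?_⟩
  have hφ0 := (hφ.2 x hx t i).le
  calc _ ≤ l * (CD * (volume.real Ω * (l * (ε / (c + 1) * R)))) * φ x t i :=
        abs_Lop_sub_Lop_le hK hk hφ hCD hR hδ hx t i
    _ = c / (c + 1) * ε * φ x t i := by ring
    _ ≤ 1 * ε * φ x t i := by
        gcongr
        exact (div_le_one (by positivity)).2 (by linarith)
    _ = ε * φ x t i := by ring

theorem exists_abs_sum_Lop_le [Nonempty (Fin l)] (hK : IsCompact (closure Ω))
    (hne : (closure Ω).Nonempty) {C : ℝ} (hC : IsNonlocalBound Ω D B k C) (hφ : MemX1pp Ω φ) :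
    ∃ x ∈ closure Ω, ∃ t, 0 < ∑ i, φ x t i ∧
      |∑ i, Lop Ω τ D B k φ x t i| ≤ l * C * ∑ i, φ x t i := by
  obtain ⟨⟨x, t⟩, ⟨hx, -⟩, hmax⟩ := exists_isMaxOn_prod_univ_of_periodic
    (g := fun p : X × ℝ => ∑ i, φ p.1 p.2 i) hK hne
    (continuousOn_finsetSum univ fun i _ => hφ.1.1 i) fun x hx t => by simp only [hφ.1.2.2 x hx]
  have hmax' : ∀ y ∈ closure Ω, ∀ s, ∑ i, φ y s i ≤ ∑ i, φ x t i := fun y hy s =>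
    isMaxOn_iff.mp hmax (y, s) ⟨hy, trivial⟩
  have hφS : ∀ y ∈ closure Ω, ∀ j, |φ y t j| ≤ ∑ i, φ x t i := fun y hy j => by
    rw [abs_of_pos (hφ.2 y hy t j)]
    exact (single_le_sum (fun i _ => (hφ.2 y hy t i).le) (mem_univ j)).trans (hmax' y hy t)
  have hderiv : ∑ i, deriv (fun s => φ x s i) t = 0 := by
    rw [← deriv_fun_sum fun i _ => ((hφ.1.2.1 x hx i).differentiable one_ne_zero).differentiableAt]
    exact (isMaxOn_univ_iff.mpr (hmax' x hx)).isLocalMax univ_mem |>.deriv_eq_zero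
  refine ⟨x, hx, t, sum_pos (fun i _ => hφ.2 x hx t i) univ_nonempty, ?_⟩
  simp only [Lop_eq_nonlocalPart, sum_add_distrib, ← mul_sum, hderiv, mul_zero, zero_add]
  calc |∑ i, nonlocalPart Ω D B k φ x t i| ≤ ∑ i, |nonlocalPart Ω D B k φ x t i| :=
        abs_sum_le_sum_abs _ _
    _ ≤ ∑ _i : Fin l, C * ∑ i, φ x t i := sum_le_sum fun i _ => hC φ x t _ hx hφS i
    _ = l * C * ∑ i, φ x t i := by simp [mul_assoc]

def lamPSet (Ω : Set X) (τ : ℝ) (D B : X → ℝ → Fin l → Fin l → ℝ)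
    (k : Fin l → X → X → ℝ → ℝ) : Set ℝ :=
  {lam | ∃ φ, MemX1pp Ω φ ∧ ∀ x ∈ closure Ω, ∀ t i, lam * φ x t i ≤ Lop Ω τ D B k φ x t i}

def lamP'Set (Ω : Set X) (τ : ℝ) (D B : X → ℝ → Fin l → Fin l → ℝ)
    (k : Fin l → X → X → ℝ → ℝ) : Set ℝ :=
  {lam | ∃ φ, MemX1pp Ω φ ∧ ∀ x ∈ closure Ω, ∀ t i, Lop Ω τ D B k φ x t i ≤ lam * φ x t i}

theorem memX1pp_one : MemX1pp (l := l) Ω fun _ _ _ => 1 :=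
  ⟨⟨fun _ => continuousOn_const, fun _ _ _ => contDiff_const, fun _ _ _ _ => rfl⟩,
    fun _ _ _ _ => one_pos⟩

theorem abs_Lop_one_le {C : ℝ} (hC : IsNonlocalBound Ω D B k C) {x : X} (hx : x ∈ closure Ω)
    (t : ℝ) (i : Fin l) : |Lop Ω τ D B k (fun _ _ _ => 1) x t i| ≤ C := by
  simpa [Lop_eq_nonlocalPart] using hC (fun _ _ _ => 1) x t 1 hx (fun _ _ _ => by simp) i

theorem lamPSet_nonempty {C : ℝ} (hC : IsNonlocalBound Ω D B k C) :
    (lamPSet Ω τ D B k).Nonempty :=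
  ⟨-C, _, memX1pp_one, fun x hx t i => by simpa using (abs_le.mp (abs_Lop_one_le hC hx t i)).1⟩

theorem lamP'Set_nonempty {C : ℝ} (hC : IsNonlocalBound Ω D B k C) :
    (lamP'Set Ω τ D B k).Nonempty :=
  ⟨C, _, memX1pp_one, fun x hx t i => by simpa using (abs_le.mp (abs_Lop_one_le hC hx t i)).2⟩

theorem lamPSet_bddAbove [Nonempty (Fin l)] (hK : IsCompact (closure Ω))
    (hne : (closure Ω).Nonempty) {C : ℝ} (hC : IsNonlocalBound Ω D B k C) :
    BddAbove (lamPSet Ω τ D B k) := by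
  refine ⟨l * C, fun lam ⟨φ, hφ, hlam⟩ => ?_⟩
  obtain ⟨x, hx, t, hψ, hL⟩ := exists_abs_sum_Lop_le (τ := τ) hK hne hC hφ
  refine le_of_mul_le_mul_right ?_ hψ
  calc lam * ∑ i, φ x t i = ∑ i, lam * φ x t i := mul_sum _ _ _
    _ ≤ ∑ i, Lop Ω τ D B k φ x t i := sum_le_sum fun i _ => hlam x hx t i
    _ ≤ l * C * ∑ i, φ x t i := (le_abs_self _).trans hL

theorem lamP'Set_bddBelow [Nonempty (Fin l)] (hK : IsCompact (closure Ω))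
    (hne : (closure Ω).Nonempty) {C : ℝ} (hC : IsNonlocalBound Ω D B k C) :
    BddBelow (lamP'Set Ω τ D B k) := by
  refine ⟨-(l * C), fun lam ⟨φ, hφ, hlam⟩ => ?_⟩
  obtain ⟨x, hx, t, hψ, hL⟩ := exists_abs_sum_Lop_le (τ := τ) hK hne hC hφ
  refine le_of_mul_le_mul_right ?_ hψ
  calc -(l * C) * ∑ i, φ x t i = -(l * C * ∑ i, φ x t i) := neg_mul _ _
    _ ≤ ∑ i, Lop Ω τ D B k φ x t i := neg_le_of_abs_le hL
    _ ≤ ∑ i, lam * φ x t i := sum_le_sum fun i _ => hlam x hx t i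
    _ = lam * ∑ i, φ x t i := (mul_sum _ _ _).symm

theorem sub_mem_lamPSet {lam ε : ℝ} (hφ : MemX1pp Ω φ)
    (hlam : ∀ x ∈ closure Ω, ∀ t i, lam * φ x t i ≤ Lop Ω τ D B k φ x t i)
    (hLop : ∀ x ∈ closure Ω, ∀ t i,
      |Lop Ω τ D B' k φ x t i - Lop Ω τ D B k φ x t i| ≤ ε * φ x t i) :
    lam - ε ∈ lamPSet Ω τ D B' k :=
  ⟨φ, hφ, fun x hx t i => by
    linarith [hlam x hx t i, (abs_le.mp (hLop x hx t i)).1, sub_mul lam ε (φ x t i)]⟩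

theorem add_mem_lamP'Set {lam ε : ℝ} (hφ : MemX1pp Ω φ)
    (hlam : ∀ x ∈ closure Ω, ∀ t i, Lop Ω τ D B k φ x t i ≤ lam * φ x t i)
    (hLop : ∀ x ∈ closure Ω, ∀ t i,
      |Lop Ω τ D B' k φ x t i - Lop Ω τ D B k φ x t i| ≤ ε * φ x t i) :
    lam + ε ∈ lamP'Set Ω τ D B' k :=
  ⟨φ, hφ, fun x hx t i => by
    linarith [hlam x hx t i, (abs_le.mp (hLop x hx t i)).2, add_mul lam ε (φ x t i)]⟩

end PeriodicNonlocal

open PeriodicNonlocal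

theorem stmt8_general {N l : ℕ} (hl : 1 ≤ l)
    (Ω : Set (EuclideanSpace ℝ (Fin N))) (hΩne : Ω.Nonempty)
    (hΩb : Bornology.IsBounded Ω) (τ : ℝ)
    (D A : EuclideanSpace ℝ (Fin N) → ℝ → Fin l → Fin l → ℝ)
    (k : Fin l → EuclideanSpace ℝ (Fin N) → EuclideanSpace ℝ (Fin N) → ℝ → ℝ)
    (hH1 : HypH1 Ω D) (hH2 : HypH2 Ω A) (hH3 : HypH3 k) :
    ∀ ε > (0:ℝ), ∃ δ > (0:ℝ), ∀ A' : EuclideanSpace ℝ (Fin N) → ℝ → Fin l → Fin l → ℝ,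
      HypH2 Ω A' →
      (∀ x ∈ closure Ω, ∀ (t : ℝ) (i j : Fin l), |A' x t i j - A x t i j| ≤ δ) →
      lamP Ω τ D A k - ε ≤ lamP Ω τ D A' k ∧ lamP' Ω τ D A' k ≤ lamP' Ω τ D A k + ε := by
  intro ε hε
  have : Nonempty (Fin l) := Fin.pos_iff_nonempty.mp hl
  have hK : IsCompact (closure Ω) := hΩb.isCompact_closure
  obtain ⟨C, hC⟩ := exists_isNonlocalBound hK hH1 hH3 hH2
  obtain ⟨lam, ⟨φ, hφ, hlam⟩, hlt⟩ := exists_lt_of_lt_csSup (lamPSet_nonempty (τ := τ) hC)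
    (sub_lt_self (lamP Ω τ D A k) (half_pos hε))
  obtain ⟨lam', ⟨φ', hφ', hlam'⟩, hlt'⟩ := exists_lt_of_csInf_lt (lamP'Set_nonempty (τ := τ) hC)
    (lt_add_of_pos_right (lamP' Ω τ D A k) (half_pos hε))
  obtain ⟨δ, hδ, hLop⟩ := exists_forall_abs_Lop_sub_le (τ := τ) hK hH1 hH3.1 hφ (half_pos hε)
  obtain ⟨δ', hδ', hLop'⟩ := exists_forall_abs_Lop_sub_le (τ := τ) hK hH1 hH3.1 hφ' (half_pos hε)
  refine ⟨min δ δ', lt_min hδ hδ', fun A' hA' hAA' => ?_⟩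
  obtain ⟨C', hC'⟩ := exists_isNonlocalBound hK hH1 hH3 hA'
  have hφA' := hLop A A' fun x hx t i j => (hAA' x hx t i j).trans (min_le_left _ _)
  have hφ'A' := hLop' A A' fun x hx t i j => (hAA' x hx t i j).trans (min_le_right _ _)
  have hsup := le_csSup (lamPSet_bddAbove hK hΩne.closure hC') (sub_mem_lamPSet hφ hlam hφA')
  have hinf := csInf_le (lamP'Set_bddBelow hK hΩne.closure hC') (add_mem_lamP'Set hφ' hlam' hφ'A')
  exact ⟨(by linarith : lamP Ω τ D A k - ε ≤ sSup (lamPSet Ω τ D A' k)),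
    (by linarith : sInf (lamP'Set Ω τ D A' k) ≤ lamP' Ω τ D A k + ε)⟩

theorem stmt8 {N l : ℕ} (hN : 1 ≤ N) (hl : 1 ≤ l)
    (Ω : Set (EuclideanSpace ℝ (Fin N))) (hΩne : Ω.Nonempty) (hΩo : IsOpen Ω)
    (hΩb : Bornology.IsBounded Ω) (τ : ℝ) (hτ : 0 < τ)
    (D A : EuclideanSpace ℝ (Fin N) → ℝ → Fin l → Fin l → ℝ)
    (k : Fin l → EuclideanSpace ℝ (Fin N) → EuclideanSpace ℝ (Fin N) → ℝ → ℝ)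
    (hH1 : HypH1 Ω D) (hH2 : HypH2 Ω A) (hH3 : HypH3 k) :
    ∀ ε > (0:ℝ), ∃ δ > (0:ℝ), ∀ A' : EuclideanSpace ℝ (Fin N) → ℝ → Fin l → Fin l → ℝ,
      HypH2 Ω A' →
      (∀ x ∈ closure Ω, ∀ (t : ℝ) (i j : Fin l), |A' x t i j - A x t i j| ≤ δ) →
      lamP Ω τ D A k - ε ≤ lamP Ω τ D A' k ∧ lamP' Ω τ D A' k ≤ lamP' Ω τ D A k + ε :=
  stmt8_general hl Ω hΩne hΩb τ D A k hH1 hH2 hH3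
end
end

section
/- Assume (H1), (H̃2), (H3), and suppose there exist λ ∈ ℝ and φ ∈ 𝒳₁^{++} with L_{Ω,k,A}[φ](x,t) = λφ(x,t) for all (x,t) ∈ cl(Ω)×ℝ. Then there exists a constant C > 0 such that for every nonempty open subset Ω₁ ⊆ Ω, |λ_p(L_{Ω₁,k,A}) − λ_p(L_{Ω,k,A})| ≤ C·vol(Ω∖Ω₁), where vol denotes N-dimensional Lebesgue measure and L_{Ω₁,k,A} is the operator acting on functions on cl(Ω₁)×ℝ obtained by restricting D, A and the kernels and integrating over Ω₁. -/
open MeasureTheory Filter Topology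

noncomputable section

/-!
The restriction of the principal eigenfunction `φ` to `Ω₁` is almost an eigenfunction there:
`L_{Ω₁}φ - λφ` only consists of integrals over `Ω \ Ω₁` of an integrand that is continuous and
periodic, hence bounded, so `|L_{Ω₁}φ - λφ| ≤ C₁ |Ω \ Ω₁|`. A maximum principle turns such an
approximate eigenfunction into bounds on `λ_p`: `φ` itself is a test function giving
`λ_p ≥ λ - C₁ |Ω \ Ω₁| / min φ`, and for any positive `ψ` with `L ψ ≥ λ' ψ` one compares `ψ` with
`θ φ`, `θ = max ψ / φ`; at a point where they touch, the cooperative structure of `L`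
(`D ≥ 0`, `k ≥ 0`, `A` off-diagonally nonnegative) gives `L ψ ≤ θ L φ`, whence
`λ' ≤ λ + C₁ |Ω \ Ω₁| / min φ`. On `Ω` itself the same argument with no error term gives
`λ_p(L_Ω) = λ`.
-/

open Set

section Periodic

variable {X ι : Type*} {K : Set X} {g : ι → X → ℝ → ℝ}

lemma mem_iUnion_image_prod_univ {i : ι} {x : X} (hx : x ∈ K) (t : ℝ) :
    g i x t ∈ ⋃ i, (fun p : X × ℝ => g i p.1 p.2) '' (K ×ˢ univ) :=
  mem_iUnion.2 ⟨i, (x, t), ⟨hx, trivial⟩, rfl⟩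

variable [TopologicalSpace X] [Finite ι]

lemma isCompact_iUnion_image_of_periodic (hK : IsCompact K)
    (hg : ∀ i, ContinuousOn (fun p : X × ℝ => g i p.1 p.2) (K ×ˢ univ))
    (hper : ∀ i, ∀ x ∈ K, Function.Periodic (g i x) 1) :
    IsCompact (⋃ i, (fun p : X × ℝ => g i p.1 p.2) '' (K ×ˢ univ)) := by
  refine isCompact_iUnion fun i => ?_
  have hIcc : (fun p : X × ℝ => g i p.1 p.2) '' (K ×ˢ univ)
      = (fun p : X × ℝ => g i p.1 p.2) '' (K ×ˢ Icc 0 1) := by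
    refine subset_antisymm ?_ (image_mono (prod_mono subset_rfl (subset_univ _)))
    rintro _ ⟨⟨x, t⟩, ⟨hx, -⟩, rfl⟩
    obtain ⟨s, hs, hts⟩ := (hper i x hx).exists_mem_Ico₀ one_pos t
    exact ⟨(x, s), ⟨hx, Ico_subset_Icc_self hs⟩, hts.symm⟩
  rw [hIcc]
  exact (hK.prod isCompact_Icc).image_of_continuousOn
    ((hg i).mono (prod_mono subset_rfl (subset_univ _)))

variable (hK : IsCompact K) (hg : ∀ i, ContinuousOn (fun p : X × ℝ => g i p.1 p.2) (K ×ˢ univ))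
  (hper : ∀ i, ∀ x ∈ K, Function.Periodic (g i x) 1)
include hK hg hper

lemma exists_abs_le_of_periodic : ∃ M, 0 < M ∧ ∀ i, ∀ x ∈ K, ∀ t, |g i x t| ≤ M := by
  obtain ⟨M, hM0, hM⟩ :=
    (isCompact_iUnion_image_of_periodic hK hg hper).isBounded.subset_closedBall_lt 0 0
  refine ⟨M, hM0, fun i x hx t => ?_⟩
  simpa [Real.dist_eq] using hM (mem_iUnion_image_prod_univ hx t)

lemma exists_pos_le_of_periodic (hpos : ∀ i, ∀ x ∈ K, ∀ t, 0 < g i x t) :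
    ∃ m, 0 < m ∧ ∀ i, ∀ x ∈ K, ∀ t, m ≤ g i x t := by
  obtain ⟨m, hm0, hm⟩ := (isCompact_iUnion_image_of_periodic hK hg hper).exists_forall_le'
    continuousOn_id (a := 0) (by
      rintro _ hv
      obtain ⟨i, ⟨x, t⟩, ⟨hx, -⟩, rfl⟩ := mem_iUnion.1 hv
      exact hpos i x hx t)
  exact ⟨m, hm0, fun i x hx t => hm _ (mem_iUnion_image_prod_univ hx t)⟩

lemma exists_forall_le_of_periodic [Nonempty ι] (hKne : K.Nonempty) :
    ∃ i₀, ∃ x₀ ∈ K, ∃ t₀, ∀ i, ∀ x ∈ K, ∀ t, g i x t ≤ g i₀ x₀ t₀ := by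
  obtain ⟨x, hx⟩ := hKne
  obtain ⟨_, hmem, hmax⟩ := (isCompact_iUnion_image_of_periodic hK hg hper).exists_isGreatest
    ⟨_, mem_iUnion_image_prod_univ (i := Classical.arbitrary ι) hx 0⟩
  obtain ⟨i₀, ⟨x₀, t₀⟩, ⟨hx₀, -⟩, rfl⟩ := mem_iUnion.1 hmem
  exact ⟨i₀, x₀, hx₀, t₀, fun i x hx t => hmax (mem_iUnion_image_prod_univ hx t)⟩

end Periodic

lemma deriv_eq_mul_deriv_of_le_of_eq {f g : ℝ → ℝ} {θ t₀ : ℝ} (hf : DifferentiableAt ℝ f t₀)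
    (hg : DifferentiableAt ℝ g t₀) (hle : ∀ t, f t ≤ θ * g t) (heq : f t₀ = θ * g t₀) :
    deriv f t₀ = θ * deriv g t₀ := by
  have hmax : IsLocalMax (fun t => f t - θ * g t) t₀ :=
    Eventually.of_forall fun t => by dsimp only; linarith [hle t]
  linarith [hmax.hasDerivAt_eq_zero (hf.hasDerivAt.sub (hg.hasDerivAt.const_mul θ))]

section Operator

variable {N l : ℕ} {Ω Ω₁ : Set (EuclideanSpace ℝ (Fin N))} {τ : ℝ}
  {D A : EuclideanSpace ℝ (Fin N) → ℝ → Fin l → Fin l → ℝ}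
  {k : Fin l → EuclideanSpace ℝ (Fin N) → EuclideanSpace ℝ (Fin N) → ℝ → ℝ}
  {φ ψ : EuclideanSpace ℝ (Fin N) → ℝ → Fin l → ℝ}

lemma MemX1.mono (h : Ω₁ ⊆ Ω) (hφ : MemX1 Ω φ) : MemX1 Ω₁ φ :=
  ⟨fun i => (hφ.1 i).mono (prod_mono (closure_mono h) subset_rfl),
    fun x hx => hφ.2.1 x (closure_mono h hx), fun x hx => hφ.2.2 x (closure_mono h hx)⟩

lemma MemX1pp.mono (h : Ω₁ ⊆ Ω) (hφ : MemX1pp Ω φ) : MemX1pp Ω₁ φ :=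
  ⟨hφ.1.mono h, fun x hx => hφ.2 x (closure_mono h hx)⟩

lemma MemX1.periodic_s9 (hφ : MemX1 Ω φ) {x} (hx : x ∈ closure Ω) (i : Fin l) :
    Function.Periodic (fun t => φ x t i) 1 :=
  fun t => hφ.2.2 x hx t i

lemma integrableOn_kernel_mul (hΩb : Bornology.IsBounded Ω) (hk : HypH3 k) (hφ : MemX1 Ω φ)
    (j : Fin l) (x : EuclideanSpace ℝ (Fin N)) (t : ℝ) :
    IntegrableOn (fun y => k j x y t * φ y t j) Ω := by
  have hc : ContinuousOn (fun y => k j x y t * φ y t j) (closure Ω) :=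
    ((hk.1 j).comp (continuous_const.prodMk (continuous_id.prodMk continuous_const))).continuousOn
      |>.mul <| (hφ.1 j).comp (continuous_id.prodMk continuous_const).continuousOn
        fun y hy => ⟨hy, mem_univ _⟩
  exact (hc.integrableOn_compact hΩb.isCompact_closure).mono_set subset_closure

/-- The integral binder in the definition of `Lop` extends to the end of the line, so the
coupling term `∑ j', A x t i j' * φ x t j'` sits inside `∫ y in Ω, _`. -/
lemma Lop_eq (x : EuclideanSpace ℝ (Fin N)) (t : ℝ) (i : Fin l) :
    Lop Ω τ D A k φ x t i = -τ * deriv (fun s => φ x s i) t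
      + ∑ j, D x t i j * ∫ y in Ω, (k j x y t * φ y t j + ∑ j', A x t i j' * φ x t j') :=
  rfl

lemma Lop_sub_Lop_of_subset (hΩb : Bornology.IsBounded Ω) (hk : HypH3 k) (hφ : MemX1 Ω φ)
    (h1m : MeasurableSet Ω₁) (h1s : Ω₁ ⊆ Ω) (x : EuclideanSpace ℝ (Fin N)) (t : ℝ) (i : Fin l) :
    Lop Ω₁ τ D A k φ x t i - Lop Ω τ D A k φ x t i
      = -∑ j, ∫ y in Ω \ Ω₁, D x t i j * (k j x y t * φ y t j + ∑ j', A x t i j' * φ x t j') := by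
  have hint : ∀ j, IntegrableOn
      (fun y => k j x y t * φ y t j + ∑ j', A x t i j' * φ x t j') Ω := fun j =>
    (integrableOn_kernel_mul hΩb hk hφ j x t).add (integrableOn_const hΩb.measure_lt_top.ne)
  simp only [Lop_eq, integral_const_mul, setIntegral_sdiff h1m (hint _) h1s, mul_sub,
    Finset.sum_sub_distrib]
  ring

lemma exists_abs_Lop_sub_Lop_le (hΩb : Bornology.IsBounded Ω) (hD : HypH1 Ω D) (hA : HypH2 Ω A)
    (hk : HypH3 k) (hφ : MemX1 Ω φ) :
    ∃ C, 0 ≤ C ∧ ∀ Ω₁, MeasurableSet Ω₁ → Ω₁ ⊆ Ω → ∀ x ∈ closure Ω, ∀ t (i : Fin l),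
      |Lop Ω₁ τ D A k φ x t i - Lop Ω τ D A k φ x t i| ≤ C * (volume (Ω \ Ω₁)).toReal := by
  set K := closure Ω ×ˢ closure Ω
  let G : Fin l × Fin l → EuclideanSpace ℝ (Fin N) × EuclideanSpace ℝ (Fin N) → ℝ → ℝ :=
    fun ij p t => D p.1 t ij.1 ij.2
      * (k ij.2 p.1 p.2 t * φ p.2 t ij.2 + ∑ j', A p.1 t ij.1 j' * φ p.1 t j')
  have hfst : ∀ {f : EuclideanSpace ℝ (Fin N) × ℝ → ℝ}, ContinuousOn f (closure Ω ×ˢ univ) →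
      ContinuousOn (fun q : _ × ℝ => f (q.1.1, q.2)) (K ×ˢ univ) :=
    fun hf => hf.comp (by fun_prop) fun q hq => ⟨hq.1.1, trivial⟩
  have hsnd : ∀ {f : EuclideanSpace ℝ (Fin N) × ℝ → ℝ}, ContinuousOn f (closure Ω ×ˢ univ) →
      ContinuousOn (fun q : _ × ℝ => f (q.1.2, q.2)) (K ×ˢ univ) :=
    fun hf => hf.comp (by fun_prop) fun q hq => ⟨hq.1.2, trivial⟩
  have hkc : ∀ j, Continuous fun q : (EuclideanSpace ℝ (Fin N) × EuclideanSpace ℝ (Fin N)) × ℝ =>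
      k j q.1.1 q.1.2 q.2 := fun j =>
    (hk.1 j).comp (f := fun q : (_ × _) × ℝ => (q.1.1, q.1.2, q.2)) (by fun_prop)
  have hGc : ∀ ij, ContinuousOn (fun q : _ × ℝ => G ij q.1 q.2) (K ×ˢ univ) := fun ⟨i, j⟩ =>
    (hfst (hD.1 i j)).mul (((hkc j).continuousOn.mul (hsnd (hφ.1 j))).add
      (continuousOn_finsetSum _ fun j' _ => (hfst (hA.1 i j')).mul (hfst (hφ.1 j'))))
  have hGper : ∀ ij, ∀ p ∈ K, Function.Periodic (G ij p) 1 := fun ⟨i, j⟩ p hp t => by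
    simp only [G, hD.2.2.2 _ hp.1, hk.2.2.2, hφ.2.2 _ hp.1, hφ.2.2 _ hp.2, hA.2.2 _ hp.1]
  obtain ⟨M, hM0, hM⟩ :=
    exists_abs_le_of_periodic (hΩb.isCompact_closure.prod hΩb.isCompact_closure) hGc hGper
  refine ⟨l * M, by positivity, fun Ω₁ h1m h1s x hx t i => ?_⟩
  have hvol : volume (Ω \ Ω₁) < ⊤ := (hΩb.subset sdiff_subset).measure_lt_top
  rw [Lop_sub_Lop_of_subset hΩb hk hφ h1m h1s, abs_neg]
  calc _ ≤ ∑ j, |∫ y in Ω \ Ω₁, G (i, j) (x, y) t| := Finset.abs_sum_le_sum_abs _ _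
    _ ≤ ∑ _j : Fin l, M * (volume (Ω \ Ω₁)).toReal := Finset.sum_le_sum fun j _ =>
        (Real.norm_eq_abs _).symm.trans_le <| norm_setIntegral_le_of_norm_le_const hvol fun y hy =>
          (Real.norm_eq_abs _).trans_le (hM (i, j) (x, y) ⟨hx, subset_closure hy.1⟩ t)
    _ = _ := by simp only [Finset.sum_const, Finset.card_univ, Fintype.card_fin, nsmul_eq_mul]; ring

lemma exists_touching_multiple (hΩne : Ω.Nonempty) (hΩb : Bornology.IsBounded Ω) [NeZero l]
    (hφ : MemX1pp Ω φ) (hψ : MemX1pp Ω ψ) :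
    ∃ θ, 0 < θ ∧ ∃ i₀, ∃ x₀ ∈ closure Ω, ∃ t₀,
      (∀ x ∈ closure Ω, ∀ t i, ψ x t i ≤ θ * φ x t i) ∧ ψ x₀ t₀ i₀ = θ * φ x₀ t₀ i₀ := by
  obtain ⟨i₀, x₀, hx₀, t₀, hmax⟩ :=
    exists_forall_le_of_periodic (g := fun i x t => ψ x t i / φ x t i)
      hΩb.isCompact_closure (fun i => (hψ.1.1 i).div (hφ.1.1 i) fun p hp => (hφ.2 _ hp.1 _ _).ne')
      (fun i x hx t => by simp only [hψ.1.2.2 x hx, hφ.1.2.2 x hx]) hΩne.closure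
  refine ⟨ψ x₀ t₀ i₀ / φ x₀ t₀ i₀, div_pos (hψ.2 _ hx₀ _ _) (hφ.2 _ hx₀ _ _), i₀, x₀, hx₀, t₀,
    fun x hx t i => ?_, (div_mul_cancel₀ _ (hφ.2 _ hx₀ _ _).ne').symm⟩
  exact (div_le_iff₀ (hφ.2 x hx t i)).1 (hmax i x hx t)

lemma Lop_le_mul_Lop_of_le_of_eq {θ : ℝ} {x₀ : EuclideanSpace ℝ (Fin N)} {t₀ : ℝ} {i₀ : Fin l}
    (hΩm : MeasurableSet Ω) (hΩb : Bornology.IsBounded Ω)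
    (hD : ∀ x ∈ closure Ω, ∀ t (i j : Fin l), 0 ≤ D x t i j)
    (hA : ∀ x ∈ closure Ω, ∀ t (i j : Fin l), i ≠ j → 0 ≤ A x t i j) (hk : HypH3 k)
    (hφ : MemX1 Ω φ) (hψ : MemX1 Ω ψ) (hle : ∀ x ∈ closure Ω, ∀ t i, ψ x t i ≤ θ * φ x t i)
    (hx₀ : x₀ ∈ closure Ω) (heq : ψ x₀ t₀ i₀ = θ * φ x₀ t₀ i₀) :
    Lop Ω τ D A k ψ x₀ t₀ i₀ ≤ θ * Lop Ω τ D A k φ x₀ t₀ i₀ := by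
  have hderiv : deriv (fun s => ψ x₀ s i₀) t₀ = θ * deriv (fun s => φ x₀ s i₀) t₀ :=
    deriv_eq_mul_deriv_of_le_of_eq ((hψ.2.1 x₀ hx₀ i₀).differentiable one_ne_zero t₀)
      ((hφ.2.1 x₀ hx₀ i₀).differentiable one_ne_zero t₀) (fun t => hle x₀ hx₀ t i₀) heq
  have hcoupling :
      ∑ j', A x₀ t₀ i₀ j' * ψ x₀ t₀ j' ≤ θ * ∑ j', A x₀ t₀ i₀ j' * φ x₀ t₀ j' := by
    rw [Finset.mul_sum]
    refine Finset.sum_le_sum fun j' _ => ?_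
    rcases eq_or_ne j' i₀ with rfl | hj'
    · linear_combination A x₀ t₀ j' j' * heq
    · linear_combination
        mul_le_mul_of_nonneg_left (hle x₀ hx₀ t₀ j') (hA x₀ hx₀ t₀ i₀ j' hj'.symm)
  have hint : ∀ j, ∫ y in Ω, (k j x₀ y t₀ * ψ y t₀ j + ∑ j', A x₀ t₀ i₀ j' * ψ x₀ t₀ j')
      ≤ θ * ∫ y in Ω, (k j x₀ y t₀ * φ y t₀ j + ∑ j', A x₀ t₀ i₀ j' * φ x₀ t₀ j') := by
    intro j
    have hfin := (hΩb.measure_lt_top (μ := volume)).ne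
    rw [← integral_const_mul]
    refine setIntegral_mono_on
      ((integrableOn_kernel_mul hΩb hk hψ j x₀ t₀).add (integrableOn_const hfin))
      (((integrableOn_kernel_mul hΩb hk hφ j x₀ t₀).add (integrableOn_const hfin)).const_mul θ)
      hΩm fun y hy => ?_
    linear_combination hcoupling +
      mul_le_mul_of_nonneg_left (hle y (subset_closure hy) t₀ j) (hk.2.1 j x₀ y t₀)
  rw [Lop_eq, Lop_eq, hderiv]
  calc _ ≤ -τ * (θ * deriv (fun s => φ x₀ s i₀) t₀) + ∑ j, θ * (D x₀ t₀ i₀ j *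
        ∫ y in Ω, (k j x₀ y t₀ * φ y t₀ j + ∑ j', A x₀ t₀ i₀ j' * φ x₀ t₀ j')) := by
        refine add_le_add le_rfl (Finset.sum_le_sum fun j _ => ?_)
        linear_combination mul_le_mul_of_nonneg_left (hint j) (hD x₀ hx₀ t₀ i₀ j)
    _ = _ := by rw [← Finset.mul_sum]; ring

lemma le_add_div_of_Lop_le [NeZero l] {lam lam' ε m : ℝ} (hΩne : Ω.Nonempty)
    (hΩm : MeasurableSet Ω) (hΩb : Bornology.IsBounded Ω)
    (hD : ∀ x ∈ closure Ω, ∀ t (i j : Fin l), 0 ≤ D x t i j)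
    (hA : ∀ x ∈ closure Ω, ∀ t (i j : Fin l), i ≠ j → 0 ≤ A x t i j) (hk : HypH3 k)
    (hφ : MemX1pp Ω φ) (hm : 0 < m) (hφm : ∀ x ∈ closure Ω, ∀ t i, m ≤ φ x t i) (hε : 0 ≤ ε)
    (hLφ : ∀ x ∈ closure Ω, ∀ t i, Lop Ω τ D A k φ x t i ≤ lam * φ x t i + ε)
    (hψ : MemX1pp Ω ψ) (hLψ : ∀ x ∈ closure Ω, ∀ t i, lam' * ψ x t i ≤ Lop Ω τ D A k ψ x t i) :
    lam' ≤ lam + ε / m := by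
  obtain ⟨θ, hθ, i₀, x₀, hx₀, t₀, hle, heq⟩ := exists_touching_multiple hΩne hΩb hφ hψ
  have hθε : θ * ε ≤ ε / m * ψ x₀ t₀ i₀ := by
    rw [heq, div_mul_eq_mul_div, le_div_iff₀ hm]
    linear_combination mul_le_mul_of_nonneg_left (hφm x₀ hx₀ t₀ i₀) (mul_nonneg hθ.le hε)
  refine le_of_mul_le_mul_right ?_ (hψ.2 x₀ hx₀ t₀ i₀)
  calc lam' * ψ x₀ t₀ i₀ ≤ Lop Ω τ D A k ψ x₀ t₀ i₀ := hLψ x₀ hx₀ t₀ i₀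
    _ ≤ θ * Lop Ω τ D A k φ x₀ t₀ i₀ :=
      Lop_le_mul_Lop_of_le_of_eq hΩm hΩb hD hA hk hφ.1 hψ.1 hle hx₀ heq
    _ ≤ θ * (lam * φ x₀ t₀ i₀ + ε) := mul_le_mul_of_nonneg_left (hLφ x₀ hx₀ t₀ i₀) hθ.le
    _ ≤ (lam + ε / m) * ψ x₀ t₀ i₀ := by linear_combination hθε - lam * heq

lemma abs_lamP_sub_le [NeZero l] {lam ε m : ℝ} (hΩne : Ω.Nonempty) (hΩm : MeasurableSet Ω)
    (hΩb : Bornology.IsBounded Ω) (hD : ∀ x ∈ closure Ω, ∀ t (i j : Fin l), 0 ≤ D x t i j)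
    (hA : ∀ x ∈ closure Ω, ∀ t (i j : Fin l), i ≠ j → 0 ≤ A x t i j) (hk : HypH3 k)
    (hφ : MemX1pp Ω φ) (hm : 0 < m) (hφm : ∀ x ∈ closure Ω, ∀ t i, m ≤ φ x t i) (hε : 0 ≤ ε)
    (hLφ : ∀ x ∈ closure Ω, ∀ t i, |Lop Ω τ D A k φ x t i - lam * φ x t i| ≤ ε) :
    |lamP Ω τ D A k - lam| ≤ ε / m := by
  set S := {lam' : ℝ | ∃ ψ, MemX1pp Ω ψ ∧
    ∀ x ∈ closure Ω, ∀ (t : ℝ) (i : Fin l), lam' * ψ x t i ≤ Lop Ω τ D A k ψ x t i}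
  have hub : ∀ lam' ∈ S, lam' ≤ lam + ε / m := fun lam' ⟨ψ, hψ, hLψ⟩ =>
    le_add_div_of_Lop_le hΩne hΩm hΩb hD hA hk hφ hm hφm hε
      (fun x hx t i => by linarith [(abs_le.1 (hLφ x hx t i)).2]) hψ hLψ
  have hmem : lam - ε / m ∈ S := ⟨φ, hφ, fun x hx t i => by
    have hεφ : ε ≤ ε / m * φ x t i := by
      rw [div_mul_eq_mul_div, le_div_iff₀ hm]
      exact mul_le_mul_of_nonneg_left (hφm x hx t i) hε
    linear_combination hεφ + (abs_le.1 (hLφ x hx t i)).1⟩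
  change |sSup S - lam| ≤ ε / m
  exact abs_le.2 ⟨by linarith [le_csSup ⟨_, hub⟩ hmem], by linarith [csSup_le ⟨_, hmem⟩ hub]⟩

end Operator

theorem stmt9_general {N l : ℕ} (hl : 1 ≤ l)
    (Ω : Set (EuclideanSpace ℝ (Fin N))) (hΩo : IsOpen Ω)
    (hΩb : Bornology.IsBounded Ω) (τ : ℝ)
    (D A : EuclideanSpace ℝ (Fin N) → ℝ → Fin l → Fin l → ℝ)
    (k : Fin l → EuclideanSpace ℝ (Fin N) → EuclideanSpace ℝ (Fin N) → ℝ → ℝ)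
    (hH1 : HypH1 Ω D) (hH2 : HypH2 Ω A) (hH3 : HypH3 k)
    (lam : ℝ) (φ : EuclideanSpace ℝ (Fin N) → ℝ → Fin l → ℝ)
    (hφ : MemX1pp Ω φ)
    (hφeq : ∀ x ∈ closure Ω, ∀ (t : ℝ) (i : Fin l), Lop Ω τ D A k φ x t i = lam * φ x t i) :
    ∃ C > (0:ℝ), ∀ Ω₁ : Set (EuclideanSpace ℝ (Fin N)), Ω₁.Nonempty → IsOpen Ω₁ → Ω₁ ⊆ Ω →
      |lamP Ω₁ τ D A k - lamP Ω τ D A k| ≤ C * (volume (Ω \ Ω₁)).toReal := by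
  have : NeZero l := NeZero.of_pos hl
  obtain ⟨m, hm, hφm⟩ := exists_pos_le_of_periodic (g := fun i x t => φ x t i)
    hΩb.isCompact_closure hφ.1.1 (fun i x hx => hφ.1.periodic_s9 hx i) fun i x hx t => hφ.2 x hx t i
  obtain ⟨C₁, hC₁, hLφ⟩ := exists_abs_Lop_sub_Lop_le (τ := τ) hΩb hH1 hH2 hH3 hφ.1
  refine ⟨C₁ / m + 1, by positivity, fun Ω₁ h1ne h1o h1s => ?_⟩
  have hcl : closure Ω₁ ⊆ closure Ω := closure_mono h1s
  have hΩ : lamP Ω τ D A k = lam := by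
    simpa [sub_eq_zero] using abs_lamP_sub_le (h1ne.mono h1s) hΩo.measurableSet hΩb hH1.2.1
      hH2.2.1 hH3 hφ hm (fun x hx t i => hφm i x hx t) le_rfl fun x hx t i => by
        simp only [hφeq x hx t i, sub_self, abs_zero, le_refl]
  have hΩ₁ : |lamP Ω₁ τ D A k - lam| ≤ C₁ * (volume (Ω \ Ω₁)).toReal / m :=
    abs_lamP_sub_le h1ne h1o.measurableSet (hΩb.subset h1s) (fun x hx => hH1.2.1 x (hcl hx))
      (fun x hx => hH2.2.1 x (hcl hx)) hH3 (hφ.mono h1s) hm (fun x hx t i => hφm i x (hcl hx) t)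
      (by positivity) fun x hx t i => by
        rw [← hφeq x (hcl hx) t i]
        exact hLφ Ω₁ h1o.measurableSet h1s x (hcl hx) t i
  rw [hΩ]
  calc _ ≤ C₁ / m * (volume (Ω \ Ω₁)).toReal := by rwa [div_mul_eq_mul_div]
    _ ≤ _ := by gcongr; linarith

theorem stmt9 {N l : ℕ} (hN : 1 ≤ N) (hl : 1 ≤ l)
    (Ω : Set (EuclideanSpace ℝ (Fin N))) (hΩne : Ω.Nonempty) (hΩo : IsOpen Ω)
    (hΩb : Bornology.IsBounded Ω) (τ : ℝ) (hτ : 0 < τ)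
    (D A : EuclideanSpace ℝ (Fin N) → ℝ → Fin l → Fin l → ℝ)
    (k : Fin l → EuclideanSpace ℝ (Fin N) → EuclideanSpace ℝ (Fin N) → ℝ → ℝ)
    (hH1 : HypH1 Ω D) (hH2 : HypH2 Ω A) (hH3 : HypH3 k)
    (hirr : Irred Ω D ∨ Irred Ω A)
    (lam : ℝ) (φ : EuclideanSpace ℝ (Fin N) → ℝ → Fin l → ℝ)
    (hφ : MemX1pp Ω φ)
    (hφeq : ∀ x ∈ closure Ω, ∀ (t : ℝ) (i : Fin l), Lop Ω τ D A k φ x t i = lam * φ x t i) :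
    ∃ C > (0:ℝ), ∀ Ω₁ : Set (EuclideanSpace ℝ (Fin N)), Ω₁.Nonempty → IsOpen Ω₁ → Ω₁ ⊆ Ω →
      |lamP Ω₁ τ D A k - lamP Ω τ D A k| ≤ C * (volume (Ω \ Ω₁)).toReal :=
  stmt9_general hl Ω hΩo hΩb τ D A k hH1 hH2 hH3 lam φ hφ hφeq
end
end
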